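/- arXiv:2602.07476 — 4 statements merged into one kernel-verified Lean document; each statement's English description precedes it below -/
import Mathlib

section
/- Let A ∈ ℝ^{n×n}, B ∈ ℝ^{n×m}, b ∈ ℝⁿ, and fix a Kalman controllable decomposition of (A,B) given by orthonormal matrices P₁ ∈ ℝ^{n×k}, P₂ ∈ ℝ^{n×(n−k)} with resulting blocks A₁₁, A₁₂, A₂₂, B₁. Then b lies in the image of the block matrix (A, B) ∈ ℝ^{n×(n+m)} if and only if P₂ᵀ b lies in the image of A₂₂. -/
open MeasureTheory Matrix Filter

namespace Turnpike

/-- Euclidean norm of a real vector. -/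
noncomputable def vnorm {n : ℕ} (x : Fin n → ℝ) : ℝ := Real.sqrt (∑ i, (x i) ^ 2)

/-- Frobenius norm of a real matrix. -/
noncomputable def mnorm {n m : ℕ} (M : Matrix (Fin n) (Fin m) ℝ) : ℝ :=
  Real.sqrt (∑ i, ∑ j, (M i j) ^ 2)

/-- Euclidean norm of a complex vector. -/
noncomputable def cnorm {d : ℕ} (w : Fin d → ℂ) : ℝ := Real.sqrt (∑ i, ‖w i‖ ^ 2)

/-- The state trajectory `X(t) = e^{tA} x + ∫₀ᵗ e^{(t-s)A} (B u(s) + b) ds`. -/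
noncomputable def traj {n m : ℕ} (A : Matrix (Fin n) (Fin n) ℝ) (B : Matrix (Fin n) (Fin m) ℝ)
    (b x : Fin n → ℝ) (u : ℝ → Fin m → ℝ) (t : ℝ) : Fin n → ℝ :=
  (NormedSpace.exp (t • A)).mulVec x +
    ∫ s in (0:ℝ)..t, (NormedSpace.exp ((t - s) • A)).mulVec (B.mulVec (u s) + b)

/-- `u ∈ L²(0,T;ℝᵐ)`. -/
def IsL2 {m : ℕ} (T : ℝ) (u : ℝ → Fin m → ℝ) : Prop :=
  MemLp u 2 (volume.restrict (Set.Ioc 0 T))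

/-- The cost functional `J_T(x;u) = ∫₀ᵀ f(X(t),u(t)) dt`. -/
noncomputable def cost {n m : ℕ} (A : Matrix (Fin n) (Fin n) ℝ) (B : Matrix (Fin n) (Fin m) ℝ)
    (b : Fin n → ℝ) (f : (Fin n → ℝ) → (Fin m → ℝ) → ℝ) (T : ℝ) (x : Fin n → ℝ)
    (u : ℝ → Fin m → ℝ) : ℝ :=
  ∫ t in (0:ℝ)..T, f (traj A B b x u t) (u t)

/-- `u` is an optimal control for Problem (LC)_T with initial state `x`. -/
def OptimalControl {n m : ℕ} (A : Matrix (Fin n) (Fin n) ℝ) (B : Matrix (Fin n) (Fin m) ℝ)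
    (b : Fin n → ℝ) (f : (Fin n → ℝ) → (Fin m → ℝ) → ℝ) (T : ℝ) (x : Fin n → ℝ)
    (u : ℝ → Fin m → ℝ) : Prop :=
  IsL2 T u ∧ ∀ v : ℝ → Fin m → ℝ, IsL2 T v → cost A B b f T x u ≤ cost A B b f T x v

/-- Kalman rank condition for controllability of `(A,B)`. -/
def Controllable {k m : ℕ} (A : Matrix (Fin k) (Fin k) ℝ) (B : Matrix (Fin k) (Fin m) ℝ) : Prop :=
  ∀ v : Fin k → ℝ, (∀ i : ℕ, i < k → Matrix.vecMul v (A ^ i * B) = 0) → v = 0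

/-- Observability of the pair `(A,C)`. -/
def Observable {n : ℕ} (A C : Matrix (Fin n) (Fin n) ℝ) : Prop :=
  ∀ v : Fin n → ℝ, (∀ i : ℕ, i < n → (C * A ^ i).mulVec v = 0) → v = 0

/-- A Kalman controllable decomposition of `(A,B)` given by `P₁, P₂` with `P = (P₁,P₂)`
orthogonal, columns of `P₁` spanning the controllable subspace. -/
structure KalmanDec (n k l m : ℕ) (A : Matrix (Fin n) (Fin n) ℝ) (B : Matrix (Fin n) (Fin m) ℝ)
    (P₁ : Matrix (Fin n) (Fin k) ℝ) (P₂ : Matrix (Fin n) (Fin l) ℝ) : Prop where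
  orth₁ : P₁ᵀ * P₁ = 1
  orth₂ : P₂ᵀ * P₂ = 1
  orth₁₂ : P₁ᵀ * P₂ = 0
  complete : P₁ * P₁ᵀ + P₂ * P₂ᵀ = 1
  lowerZero : P₂ᵀ * A * P₁ = 0
  inputZero : P₂ᵀ * B = 0
  ctrb : Controllable (P₁ᵀ * A * P₁) (P₁ᵀ * B)

/-- `𝒢₁`: real vectors lying in the sum of the generalized eigenspaces of `A₂₂` associated
with eigenvalues of negative real part. -/
noncomputable def G1 {l : ℕ} (A22 : Matrix (Fin l) (Fin l) ℝ) : Set (Fin l → ℝ) :=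
  {y | (fun i => (y i : ℂ)) ∈ Submodule.span ℂ
      {w : Fin l → ℂ | ∃ μ : ℂ, μ.re < 0 ∧
        ((A22.map (Complex.ofReal) - μ • 1) ^ l).mulVec w = 0}}

/-- `𝒢₂ = ker A₂₂`. -/
def G2 {l : ℕ} (A22 : Matrix (Fin l) (Fin l) ℝ) : Set (Fin l → ℝ) := {y | A22.mulVec y = 0}

/-- `w ∈ 𝒢₁ ⊕ 𝒢₂`. -/
def Feas {l : ℕ} (A22 : Matrix (Fin l) (Fin l) ℝ) (w : Fin l → ℝ) : Prop :=
  ∃ y₁ ∈ G1 A22, ∃ y₂ ∈ G2 A22, w = y₁ + y₂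

/-- `IsQ2 A22 w y₂` says `y₂ = Q₂ w`: `y₂ ∈ 𝒢₂` and `w - y₂ ∈ 𝒢₁`
(in particular `w ∈ 𝒢₁ ⊕ 𝒢₂`). -/
def IsQ2 {l : ℕ} (A22 : Matrix (Fin l) (Fin l) ℝ) (w y₂ : Fin l → ℝ) : Prop :=
  y₂ ∈ G2 A22 ∧ w - y₂ ∈ G1 A22

/-- Membership `(z,u) ∈ 𝒱ₓ`. -/
def InV {n m l : ℕ} (A : Matrix (Fin n) (Fin n) ℝ) (B : Matrix (Fin n) (Fin m) ℝ)
    (b : Fin n → ℝ) (P₂ : Matrix (Fin n) (Fin l) ℝ) (c : Fin l → ℝ) (x : Fin n → ℝ)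
    (z : Fin n → ℝ) (u : Fin m → ℝ) : Prop :=
  A.mulVec z + B.mulVec u + b = 0 ∧
  IsQ2 (P₂ᵀ * A * P₂) (P₂ᵀ.mulVec x + c) (P₂ᵀ.mulVec z + c)

/-- Partial gradient `f_x`. -/
noncomputable def gradX {n m : ℕ} (f : (Fin n → ℝ) → (Fin m → ℝ) → ℝ)
    (x : Fin n → ℝ) (u : Fin m → ℝ) : Fin n → ℝ :=
  fun i => deriv (fun s : ℝ => f (x + s • (Pi.single i 1 : Fin n → ℝ)) u) 0

/-- Partial gradient `f_u`. -/
noncomputable def gradU {n m : ℕ} (f : (Fin n → ℝ) → (Fin m → ℝ) → ℝ)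
    (x : Fin n → ℝ) (u : Fin m → ℝ) : Fin m → ℝ :=
  fun j => deriv (fun s : ℝ => f x (u + s • (Pi.single j 1 : Fin m → ℝ))) 0

/-- Full Hessian matrix `∇²f(x,u)` on `ℝⁿ × ℝᵐ`, indexed by `Fin n ⊕ Fin m`. -/
noncomputable def hessMat {n m : ℕ} (f : (Fin n → ℝ) → (Fin m → ℝ) → ℝ)
    (x : Fin n → ℝ) (u : Fin m → ℝ) : Matrix (Fin n ⊕ Fin m) (Fin n ⊕ Fin m) ℝ :=
  fun i j => deriv (fun s : ℝ => deriv (fun r : ℝ =>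
      f (fun a => (Sum.elim x u + s • (Pi.single i 1 : Fin n ⊕ Fin m → ℝ) + r • (Pi.single j 1 : Fin n ⊕ Fin m → ℝ)) (Sum.inl a))
        (fun a => (Sum.elim x u + s • (Pi.single i 1 : Fin n ⊕ Fin m → ℝ) + r • (Pi.single j 1 : Fin n ⊕ Fin m → ℝ)) (Sum.inr a))) 0) 0

/-- Assumption (A2): `f` is `C²` and `∇²f ⪰ δ I` everywhere. -/
def A2Hyp {n m : ℕ} (f : (Fin n → ℝ) → (Fin m → ℝ) → ℝ) (δ : ℝ) : Prop :=
  ContDiff ℝ 2 (fun p : (Fin n → ℝ) × (Fin m → ℝ) => f p.1 p.2) ∧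
  ∀ (x : Fin n → ℝ) (u : Fin m → ℝ),
    (hessMat f x u - δ • (1 : Matrix (Fin n ⊕ Fin m) (Fin n ⊕ Fin m) ℝ)).PosSemidef

/-- Second partial derivative matrix `f_{xu}(x,u) ∈ ℝ^{n×m}`. -/
noncomputable def fxuMat {n m : ℕ} (f : (Fin n → ℝ) → (Fin m → ℝ) → ℝ)
    (x : Fin n → ℝ) (u : Fin m → ℝ) : Matrix (Fin n) (Fin m) ℝ :=
  fun i j => deriv (fun s : ℝ => gradU f (x + s • (Pi.single i 1 : Fin n → ℝ)) u j) 0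

/-- Second partial derivative matrix `f_{uu}(x,u) ∈ ℝ^{m×m}`. -/
noncomputable def fuuMat {n m : ℕ} (f : (Fin n → ℝ) → (Fin m → ℝ) → ℝ)
    (x : Fin n → ℝ) (u : Fin m → ℝ) : Matrix (Fin m) (Fin m) ℝ :=
  fun i j => deriv (fun s : ℝ => gradU f x (u + s • (Pi.single i 1 : Fin m → ℝ)) j) 0

/-- Assumption (A3). -/
def A3Hyp {n m : ℕ} (f : (Fin n → ℝ) → (Fin m → ℝ) → ℝ) : Prop :=
  ∀ r > (0:ℝ), ∃ γ > (0:ℝ), ∀ (x : Fin n → ℝ) (u : Fin m → ℝ), vnorm x ≤ r →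
    mnorm (fxuMat f x u * (fuuMat f x u)⁻¹) ≤ γ

/-- Value function of Problem (LC)_T. -/
noncomputable def VT {n m : ℕ} (A : Matrix (Fin n) (Fin n) ℝ) (B : Matrix (Fin n) (Fin m) ℝ)
    (b : Fin n → ℝ) (f : (Fin n → ℝ) → (Fin m → ℝ) → ℝ) (T : ℝ) (x : Fin n → ℝ) : ℝ :=
  sInf {r | ∃ u : ℝ → Fin m → ℝ, IsL2 T u ∧ r = cost A B b f T x u}

/-- Optimal value of the static Problem (O). -/
noncomputable def Vstar {n m l : ℕ} (A : Matrix (Fin n) (Fin n) ℝ)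
    (B : Matrix (Fin n) (Fin m) ℝ) (b : Fin n → ℝ) (P₂ : Matrix (Fin n) (Fin l) ℝ)
    (c : Fin l → ℝ) (f : (Fin n → ℝ) → (Fin m → ℝ) → ℝ) (x : Fin n → ℝ) : ℝ :=
  sInf {r | ∃ z u, InV A B b P₂ c x z u ∧ r = f z u}

/-- The matrix `Π(s) = ∫₀¹ (1-θ) ∇²f((1-θ)x* + θX(s), (1-θ)u* + θu(s)) dθ`, entrywise. -/
noncomputable def PiMat {n m : ℕ} (f : (Fin n → ℝ) → (Fin m → ℝ) → ℝ)
    (xs : Fin n → ℝ) (us : Fin m → ℝ) (X : ℝ → Fin n → ℝ) (u : ℝ → Fin m → ℝ)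
    (s : ℝ) : Matrix (Fin n ⊕ Fin m) (Fin n ⊕ Fin m) ℝ :=
  fun i j => ∫ θ in (0:ℝ)..1,
    (1 - θ) * hessMat f ((1 - θ) • xs + θ • X s) ((1 - θ) • us + θ • u s) i j

/-! In the coordinates `x ↦ (P₁ᵀ x, P₂ᵀ x)` the map `(p, q) ↦ A p + B q` is block upper triangular:
its second block row is `p ↦ A₂₂ (P₂ᵀ p)`, and its first block row `(A₁₁, A₁₂, B₁)` is surjective
because `(A₁₁, B₁)` is controllable. Hence the only constraint on `b` is `P₂ᵀ b ∈ im A₂₂`. -/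

theorem _root_.Matrix.mulVec_surjective_of_vecMul_injective {K ι κ : Type*} [Field K]
    [Fintype ι] [Fintype κ] {M : Matrix ι κ K} (h : Function.Injective M.vecMul) :
    Function.Surjective M.mulVec := by
  have hrange : LinearMap.range M.mulVecLin = ⊤ := by
    apply Submodule.eq_top_of_finrank_eq
    rw [Module.finrank_fintype_fun_eq_card]
    exact (Matrix.vecMul_injective_iff.mp h).rank_matrix
  exact LinearMap.range_eq_top.mp hrange

theorem Controllable.eq_zero_of_vecMul_eq_zero {k m : ℕ} {A : Matrix (Fin k) (Fin k) ℝ}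
    {B : Matrix (Fin k) (Fin m) ℝ} (h : Controllable A B) {v : Fin k → ℝ}
    (hA : v ᵥ* A = 0) (hB : v ᵥ* B = 0) : v = 0 :=
  h v fun i _ => by
    cases i with
    | zero => simpa using hB
    | succ i => rw [pow_succ', Matrix.mul_assoc, ← vecMul_vecMul, hA, zero_vecMul]

theorem Controllable.exists_mulVec_add_mulVec_eq {k m : ℕ} {A : Matrix (Fin k) (Fin k) ℝ}
    {B : Matrix (Fin k) (Fin m) ℝ} (h : Controllable A B) (c : Fin k → ℝ) :
    ∃ z q, A *ᵥ z + B *ᵥ q = c := by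
  have hinj : Function.Injective (fromCols A B).vecMul := by
    rw [← coe_vecMulLinear, injective_iff_map_eq_zero]
    intro v (hv : v ᵥ* fromCols A B = 0)
    exact h.eq_zero_of_vecMul_eq_zero (funext fun i => congrFun hv (Sum.inl i))
      (funext fun j => congrFun hv (Sum.inr j))
  obtain ⟨x, hx⟩ := mulVec_surjective_of_vecMul_injective hinj c
  exact ⟨x ∘ Sum.inl, x ∘ Sum.inr, by rwa [fromCols_mulVec] at hx⟩

section Coordinates

variable {R ι κ₁ κ₂ : Type*} [Semiring R] [Fintype ι] [DecidableEq ι] [Fintype κ₁] [Fintype κ₂]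
  {P₁ : Matrix ι κ₁ R} {P₂ : Matrix ι κ₂ R}

theorem eq_of_transpose_mulVec_eq (hc : P₁ * P₁ᵀ + P₂ * P₂ᵀ = 1) {x y : ι → R}
    (h₁ : P₁ᵀ *ᵥ x = P₁ᵀ *ᵥ y) (h₂ : P₂ᵀ *ᵥ x = P₂ᵀ *ᵥ y) : x = y := by
  have hsplit (v : ι → R) : P₁ *ᵥ (P₁ᵀ *ᵥ v) + P₂ *ᵥ (P₂ᵀ *ᵥ v) = v := by
    rw [mulVec_mulVec, mulVec_mulVec, ← add_mulVec, hc, one_mulVec]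
  rw [← hsplit x, h₁, h₂, hsplit]

theorem transpose_mul_mul_mul_transpose (hc : P₁ * P₁ᵀ + P₂ * P₂ᵀ = 1) {A : Matrix ι ι R}
    (h0 : P₂ᵀ * A * P₁ = 0) : P₂ᵀ * A * P₂ * P₂ᵀ = P₂ᵀ * A := by
  calc P₂ᵀ * A * P₂ * P₂ᵀ = P₂ᵀ * A * P₁ * P₁ᵀ + P₂ᵀ * A * P₂ * P₂ᵀ := by
        rw [h0, Matrix.zero_mul, zero_add]
    _ = P₂ᵀ * A * (P₁ * P₁ᵀ + P₂ * P₂ᵀ) := by simp only [Matrix.mul_add, Matrix.mul_assoc]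
    _ = P₂ᵀ * A := by rw [hc, Matrix.mul_one]

end Coordinates

/-- `b ∈ im(A,B)` iff `P₂ᵀ b ∈ im A₂₂` (Proposition 3.1, last claim). -/
theorem im_AB_iff_im_A22 {n k l m : ℕ} (A : Matrix (Fin n) (Fin n) ℝ)
    (B : Matrix (Fin n) (Fin m) ℝ) (P₁ : Matrix (Fin n) (Fin k) ℝ)
    (P₂ : Matrix (Fin n) (Fin l) ℝ) (hK : KalmanDec n k l m A B P₁ P₂)
    (b : Fin n → ℝ) :
    (∃ (p : Fin n → ℝ) (q : Fin m → ℝ), A.mulVec p + B.mulVec q = b) ↔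
      ∃ w : Fin l → ℝ, (P₂ᵀ * A * P₂).mulVec w = P₂ᵀ.mulVec b := by
  constructor
  · rintro ⟨p, q, rfl⟩
    refine ⟨P₂ᵀ *ᵥ p, ?_⟩
    rw [mulVec_mulVec, transpose_mul_mul_mul_transpose hK.complete hK.lowerZero, mulVec_add,
      mulVec_mulVec, mulVec_mulVec, hK.inputZero, zero_mulVec, add_zero]
  · rintro ⟨w, hw⟩
    obtain ⟨z, q, hzq⟩ :=
      hK.ctrb.exists_mulVec_add_mulVec_eq (P₁ᵀ *ᵥ b - (P₁ᵀ * A * P₂) *ᵥ w)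
    have hcoord {s : ℕ} (M : Matrix (Fin s) (Fin n) ℝ) :
        M *ᵥ (A *ᵥ (P₁ *ᵥ z + P₂ *ᵥ w) + B *ᵥ q) =
          (M * A * P₁) *ᵥ z + (M * A * P₂) *ᵥ w + (M * B) *ᵥ q := by
      simp only [mulVec_add, mulVec_mulVec, Matrix.mul_assoc]
    refine ⟨P₁ *ᵥ z + P₂ *ᵥ w, q, eq_of_transpose_mulVec_eq hK.complete ?_ ?_⟩
    · rw [hcoord, add_right_comm, hzq, sub_add_cancel]
    · rw [hcoord, hK.lowerZero, hK.inputZero, zero_mulVec, zero_mulVec, zero_add, add_zero, hw]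

end Turnpike
end

section
/- Let M ∈ ℂ^{d×d}, let λ be an eigenvalue of M, and let w be a nonzero vector in the generalized eigenspace G(λ,M) = ker (M − λ I)^d. If there exists a constant K > 0 such that ‖e^{tM} w‖ ≤ K(1 + √t) for all t ≥ 0, then either Re(λ) < 0, or Re(λ) = 0 and M w = λ w. -/
/-!
Write `N = M - λ`. Along the chain `w, N w, N² w, …` (which reaches `0` by `N^d w = 0`) the
exponential is explicit: `e^{tM} = e^{tλ} e^{tN}` and `e^{tN}` is a polynomial in `t` on vectors
killed by a power of `N`. Let `u = N^k w` be the last nonzero vector of the chain. Since `N^k`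
commutes with `e^{tM}`, the sublinear bound on `e^{tM} w` passes to `e^{tM} u = e^{tλ} u`, which
forces `Re λ ≤ 0`. If `Re λ = 0` and `k ≥ 1`, then `v = N^{k-1} w` has `‖e^{tM} v‖ = ‖v + t u‖`,
which grows linearly; hence `k = 0` and `w` is an eigenvector.
-/

open MeasureTheory Matrix Filter

open NormedSpace Asymptotics
open scoped Nat

theorem isLittleO_sqrt_id : (fun t : ℝ => √t) =o[atTop] id := by
  have hone : (fun _ => 1 : ℝ → ℝ) =o[atTop] (fun t => √t) :=
    (isLittleO_one_left_iff ℝ).mpr (tendsto_norm_atTop_atTop.comp Real.tendsto_sqrt_atTop)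
  refine ((isBigO_refl (fun t : ℝ => √t) atTop).mul_isLittleO hone).congr' ?_ ?_
  · exact .of_forall fun t => mul_one _
  · filter_upwards [eventually_ge_atTop 0] with t ht using Real.mul_self_sqrt ht

theorem isLittleO_one_add_sqrt_id : (fun t : ℝ => 1 + √t) =o[atTop] id :=
  (isLittleO_const_id_atTop 1).add isLittleO_sqrt_id

namespace Matrix

variable {n : Type*} [Fintype n] [DecidableEq n]

theorem exists_pow_mulVec_ne_zero_and_pow_succ_mulVec_eq_zero {R : Type*} [Semiring R]
    {N : Matrix n n R} {w : n → R} {m : ℕ} (hw : w ≠ 0) (hm : N ^ m *ᵥ w = 0) :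
    ∃ k, N ^ k *ᵥ w ≠ 0 ∧ N ^ (k + 1) *ᵥ w = 0 := by
  classical
  have hex : ∃ k, N ^ (k + 1) *ᵥ w = 0 :=
    ⟨m, by rw [pow_succ', ← mulVec_mulVec, hm, mulVec_zero]⟩
  refine ⟨Nat.find hex, ?_, Nat.find_spec hex⟩
  rcases h : Nat.find hex with _ | j
  · simpa using hw
  · exact Nat.find_min hex (h ▸ j.lt_succ_self)

theorem exp_mulVec_eq_tsum (A : Matrix n n ℂ) (v : n → ℂ) :
    exp A *ᵥ v = ∑' k : ℕ, (k ! : ℂ)⁻¹ • (A ^ k *ᵥ v) := by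
  let _ : NormedRing (Matrix n n ℂ) := Matrix.linftyOpNormedRing
  let _ : NormedAlgebra ℂ (Matrix n n ℂ) := Matrix.linftyOpNormedAlgebra
  let L : Matrix n n ℂ →L[ℂ] n → ℂ :=
    LinearMap.toContinuousLinearMap ((toLin' (n := n) (R := ℂ)).toLinearMap.flip v)
  have := ((exp_series_hasSum_exp' (𝕂 := ℂ) A).mapL L).tsum_eq
  simp only [L, LinearMap.coe_toContinuousLinearMap', LinearMap.flip_apply, LinearEquiv.coe_coe,
    toLin'_apply, smul_mulVec] at this
  exact this.symm

theorem exp_mulVec_eq_sum_of_pow_mulVec_eq_zero {A : Matrix n n ℂ} {v : n → ℂ} {m : ℕ}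
    (h : A ^ m *ᵥ v = 0) : exp A *ᵥ v = ∑ k ∈ Finset.range m, (k ! : ℂ)⁻¹ • (A ^ k *ᵥ v) := by
  rw [exp_mulVec_eq_tsum]
  refine tsum_eq_sum fun k hk => ?_
  obtain ⟨j, rfl⟩ := Nat.exists_eq_add_of_le (not_lt.mp (Finset.mem_range.not.mp hk))
  rw [add_comm, pow_add, ← mulVec_mulVec, h, mulVec_zero, smul_zero]

theorem exp_smul_one (μ : ℂ) : exp (μ • (1 : Matrix n n ℂ)) = Complex.exp μ • 1 := by
  let _ : NormedRing (Matrix n n ℂ) := Matrix.linftyOpNormedRing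
  let _ : NormedAlgebra ℂ (Matrix n n ℂ) := Matrix.linftyOpNormedAlgebra
  have := algebraMap_exp_comm (𝔸 := Matrix n n ℂ) μ
  rw [Algebra.algebraMap_eq_smul_one, Algebra.algebraMap_eq_smul_one,
    ← Complex.exp_eq_exp_ℂ] at this
  exact this.symm

theorem exp_eq_exp_smul_exp_sub_smul_one (A : Matrix n n ℂ) (μ : ℂ) :
    exp A = Complex.exp μ • exp (A - μ • 1) := by
  have hcomm : Commute (μ • (1 : Matrix n n ℂ)) (A - μ • 1) := (Commute.one_left _).smul_left μ
  rw [← smul_one_mul, ← exp_smul_one, ← exp_add_of_commute _ _ hcomm, add_sub_cancel]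

theorem exp_mulVec_of_mulVec_eq_smul {A : Matrix n n ℂ} {u : n → ℂ} {μ : ℂ}
    (hu : A *ᵥ u = μ • u) : exp A *ᵥ u = Complex.exp μ • u := by
  have hker : (A - μ • 1) ^ 1 *ᵥ u = 0 := by
    rw [pow_one, sub_mulVec, hu, smul_mulVec, one_mulVec, sub_self]
  rw [exp_eq_exp_smul_exp_sub_smul_one A μ, smul_mulVec,
    exp_mulVec_eq_sum_of_pow_mulVec_eq_zero hker]
  simp

theorem exp_mulVec_of_mulVec_eq_smul_add {A : Matrix n n ℂ} {u v : n → ℂ} {μ : ℂ}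
    (hu : A *ᵥ u = μ • u) (hv : A *ᵥ v = μ • v + u) : exp A *ᵥ v = Complex.exp μ • (v + u) := by
  have hvu : (A - μ • 1) *ᵥ v = u := by
    rw [sub_mulVec, hv, smul_mulVec, one_mulVec, add_sub_cancel_left]
  have hker : (A - μ • 1) ^ 2 *ᵥ v = 0 := by
    rw [sq, ← mulVec_mulVec, hvu, sub_mulVec, hu, smul_mulVec, one_mulVec, sub_self]
  rw [exp_eq_exp_smul_exp_sub_smul_one A μ, smul_mulVec,
    exp_mulVec_eq_sum_of_pow_mulVec_eq_zero hker]
  simp [Finset.sum_range_succ, hvu]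

variable {M : Matrix n n ℂ} {g : ℝ → ℝ}

theorem isBigO_exp_smul_mulVec_mulVec_of_commute {A : Matrix n n ℂ} (hA : Commute A M)
    {v : n → ℂ} (h : (fun t : ℝ => exp ((t : ℂ) • M) *ᵥ v) =O[atTop] g) :
    (fun t : ℝ => exp ((t : ℂ) • M) *ᵥ (A *ᵥ v)) =O[atTop] g := by
  have hswap (t : ℝ) : exp ((t : ℂ) • M) *ᵥ (A *ᵥ v) = A *ᵥ (exp ((t : ℂ) • M) *ᵥ v) := by
    rw [mulVec_mulVec, mulVec_mulVec, ((hA.smul_right _).exp_right).eq]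
  simp_rw [hswap]
  exact ((LinearMap.toContinuousLinearMap (toLin' A)).isBigO_comp _ atTop).trans h

theorem re_nonpos_of_isBigO_exp_smul_mulVec {u : n → ℂ} {μ : ℂ} (hg : g =o[atTop] id)
    (hu : u ≠ 0) (hMu : M *ᵥ u = μ • u)
    (h : (fun t : ℝ => exp ((t : ℂ) • M) *ᵥ u) =O[atTop] g) : μ.re ≤ 0 := by
  by_contra! hre
  have hnorm (t : ℝ) : ‖exp ((t : ℂ) • M) *ᵥ u‖ = ‖u‖ * Real.exp (μ.re * t) := by
    rw [exp_mulVec_of_mulVec_eq_smul (μ := t * μ) (by rw [smul_mulVec, hMu, smul_smul]),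
      norm_smul, Complex.norm_exp, mul_comm]
    simp [mul_comm]
  have hexp : (fun t => Real.exp (μ.re * t)) =O[atTop] g := by
    rw [← isBigO_const_mul_left_iff (norm_ne_zero_iff.mpr hu)]
    simpa only [hnorm] using h.norm_left
  refine isLittleO_irrefl (.of_forall fun t => Real.exp_ne_zero _) (hexp.trans_isLittleO ?_)
  exact hg.trans ((isLittleO_pow_exp_pos_mul_atTop 1 hre).congr_left pow_one)

theorem eq_zero_of_isBigO_exp_smul_mulVec {u v : n → ℂ} {μ : ℂ} (hg : g =o[atTop] id)
    (hre : μ.re = 0) (hMu : M *ᵥ u = μ • u) (hMv : M *ᵥ v = μ • v + u)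
    (h : (fun t : ℝ => exp ((t : ℂ) • M) *ᵥ v) =O[atTop] g) : u = 0 := by
  have hnorm (t : ℝ) : ‖exp ((t : ℂ) • M) *ᵥ v‖ = ‖v + (t : ℂ) • u‖ := by
    rw [exp_mulVec_of_mulVec_eq_smul_add (μ := t * μ) (u := (t : ℂ) • u)
      (by rw [smul_mulVec, mulVec_smul, hMu]; module)
      (by rw [smul_mulVec, hMv]; module), norm_smul, Complex.norm_exp]
    simp [hre]
  have hline : (fun t : ℝ => v + (t : ℂ) • u) =o[atTop] id := by
    rw [← isLittleO_norm_left]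
    simpa only [hnorm] using h.norm_left.trans_isLittleO hg
  have hlin : (fun t : ℝ => ‖u‖ * ‖t‖) =o[atTop] id := by
    simpa [norm_smul, mul_comm] using (hline.sub (isLittleO_const_id_atTop v)).norm_left
  by_contra hu
  refine isLittleO_irrefl (f'' := fun t : ℝ => t) (eventually_ne_atTop 0).frequently ?_
  exact isLittleO_norm_left.mp ((isLittleO_const_mul_left_iff (norm_ne_zero_iff.mpr hu)).mp hlin)

end Matrix

namespace Turnpike

theorem norm_le_cnorm {d : ℕ} (v : Fin d → ℂ) : ‖v‖ ≤ cnorm v := by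
  refine (pi_norm_le_iff_of_nonneg (Real.sqrt_nonneg _)).mpr fun i => ?_
  calc ‖v i‖ = √(‖v i‖ ^ 2) := (Real.sqrt_sq (norm_nonneg _)).symm
    _ ≤ cnorm v := Real.sqrt_le_sqrt
      (Finset.single_le_sum (f := fun j => ‖v j‖ ^ 2) (fun _ _ => sq_nonneg _) (Finset.mem_univ i))

/-- Growth of `e^{tM} w` along a generalized eigenvector forces the eigenvalue to have
negative real part, or zero real part with `w` a genuine eigenvector. -/
theorem gen_eigenvector_growth {d : ℕ} (M : Matrix (Fin d) (Fin d) ℂ) (lam : ℂ)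
    (w : Fin d → ℂ) (hw : w ≠ 0) (hgen : ((M - lam • 1) ^ d).mulVec w = 0)
    (hbound : ∃ K > (0:ℝ), ∀ t : ℝ, 0 ≤ t →
      cnorm ((NormedSpace.exp ((t : ℂ) • M)).mulVec w) ≤ K * (1 + Real.sqrt t)) :
    lam.re < 0 ∨ (lam.re = 0 ∧ M.mulVec w = lam • w) := by
  obtain ⟨K, -, hK⟩ := hbound
  have hgrowth : (fun t : ℝ => exp ((t : ℂ) • M) *ᵥ w) =O[atTop] (fun t => 1 + √t) := by
    refine .of_bound K ?_
    filter_upwards [eventually_ge_atTop 0] with t ht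
    rw [Real.norm_of_nonneg (by positivity)]
    exact (norm_le_cnorm _).trans (hK t ht)
  set N := M - lam • 1
  have hNM (j : ℕ) : Commute (N ^ j) M :=
    ((Commute.refl M).sub_left ((Commute.one_left M).smul_left lam)).pow_left j
  have hMN (x : Fin d → ℂ) : M *ᵥ x = lam • x + N *ᵥ x := by
    rw [sub_mulVec, smul_mulVec, one_mulVec, add_sub_cancel]
  obtain ⟨k, hk, hk1⟩ := exists_pow_mulVec_ne_zero_and_pow_succ_mulVec_eq_zero hw hgen
  have heig : M *ᵥ (N ^ k *ᵥ w) = lam • (N ^ k *ᵥ w) := by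
    rw [hMN, mulVec_mulVec, ← pow_succ', hk1, add_zero]
  have hre := re_nonpos_of_isBigO_exp_smul_mulVec isLittleO_one_add_sqrt_id hk heig
    (isBigO_exp_smul_mulVec_mulVec_of_commute (hNM k) hgrowth)
  refine hre.lt_or_eq.imp id fun h0 => ⟨h0, ?_⟩
  rcases k with _ | j
  · simpa using heig
  · refine absurd (eq_zero_of_isBigO_exp_smul_mulVec isLittleO_one_add_sqrt_id h0 heig ?_
      (isBigO_exp_smul_mulVec_mulVec_of_commute (hNM j) hgrowth)) hk
    rw [hMN, mulVec_mulVec, ← pow_succ']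

end Turnpike
end

section
/- Let f : ℝⁿ × ℝᵐ → ℝ be continuous, let (z,v) ∈ ℝⁿ × ℝᵐ, and let X̃ : [0,∞) → ℝⁿ and ũ : [0,∞) → ℝᵐ be bounded measurable functions such that ∫₀^∞ (|X̃(t) − z|² + |ũ(t) − v|²) dt < ∞. Then lim_{T→∞} (1/T) ∫₀ᵀ f(X̃(t), ũ(t)) dt = f(z,v). -/
open MeasureTheory Matrix Filter

namespace Turnpike

/- Away from `(z, v)` the integrand is bounded, so `|f(X̃, ũ) - f(z, v)| ≤ ε + K_ε w` on `[0, ∞)`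
with `w = |X̃ - z|² + |ũ - v|²`. Since `w` is integrable, `(1/T) ∫₀ᵀ w → 0`, and the Cesàro
averages of the integrand end up within `ε` of `f(z, v)`. -/

lemma tendsto_inv_mul_intervalIntegral_of_integrableOn_Ici {w : ℝ → ℝ}
    (hw : IntegrableOn w (Set.Ici 0)) :
    Tendsto (fun T => T⁻¹ * ∫ t in (0:ℝ)..T, w t) atTop (nhds 0) := by
  set I := ∫ t in Set.Ici 0, ‖w t‖
  have hbound : ∀ T : ℝ, 0 ≤ T → ‖T⁻¹ * ∫ t in (0:ℝ)..T, w t‖ ≤ T⁻¹ * I := by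
    intro T hT
    rw [norm_mul, Real.norm_of_nonneg (inv_nonneg.2 hT)]
    gcongr
    calc ‖∫ t in (0:ℝ)..T, w t‖ ≤ ∫ t in (0:ℝ)..T, ‖w t‖ :=
          intervalIntegral.norm_integral_le_integral_norm hT
      _ = ∫ t in Set.Ioc 0 T, ‖w t‖ := intervalIntegral.integral_of_le hT
      _ ≤ I := setIntegral_mono_set hw.norm (ae_of_all _ fun _ => norm_nonneg _)
          (ae_of_all _ (Set.Ioc_subset_Ioi_self.trans Set.Ioi_subset_Ici_self))
  refine squeeze_zero_norm' ((eventually_ge_atTop 0).mono hbound) ?_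
  simpa using tendsto_inv_atTop_zero.mul_const I

lemma tendsto_inv_mul_intervalIntegral_of_abs_sub_le {g w : ℝ → ℝ} {c : ℝ}
    (hg : AEStronglyMeasurable g (volume.restrict (Set.Ici 0)))
    (hw : IntegrableOn w (Set.Ici 0))
    (hdom : ∀ ε > 0, ∃ K, ∀ t, 0 ≤ t → |g t - c| ≤ ε + K * w t) :
    Tendsto (fun T => T⁻¹ * ∫ t in (0:ℝ)..T, g t) atTop (nhds c) := by
  refine Metric.tendsto_nhds.2 fun ε hε => ?_
  obtain ⟨K, hK⟩ := hdom (ε / 2) (half_pos hε)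
  have hsmall : ∀ᶠ T in atTop, |K * (T⁻¹ * ∫ t in (0:ℝ)..T, w t)| < ε / 2 := by
    have := (tendsto_inv_mul_intervalIntegral_of_integrableOn_Ici hw).const_mul K
    rw [mul_zero] at this
    simpa [Real.dist_eq] using Metric.tendsto_nhds.1 this (ε / 2) (half_pos hε)
  filter_upwards [hsmall, eventually_gt_atTop 0] with T hsmallT hT
  have hIoc : Set.Ioc 0 T ⊆ Set.Ici 0 := Set.Ioc_subset_Ioi_self.trans Set.Ioi_subset_Ici_self
  have hwT : IntervalIntegrable w volume 0 T :=
    (intervalIntegrable_iff_integrableOn_Ioc_of_le hT.le).2 (hw.mono_set hIoc)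
  have hgT : IntervalIntegrable g volume 0 T := by
    rw [intervalIntegrable_iff_integrableOn_Ioc_of_le hT.le]
    refine Integrable.mono' ((integrable_const (|c| + ε / 2)).add (hwT.1.const_mul K))
      (hg.mono_measure (Measure.restrict_mono hIoc le_rfl))
      (ae_restrict_of_forall_mem measurableSet_Ioc fun t ht => ?_)
    have := hK t ht.1.le
    have := abs_sub_abs_le_abs_sub (g t) c
    rw [Real.norm_eq_abs, Pi.add_apply]
    linarith
  have hmono : ∫ t in (0:ℝ)..T, |g t - c| ≤ ∫ t in (0:ℝ)..T, (ε / 2 + K * w t) :=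
    intervalIntegral.integral_mono_on hT.le (hgT.sub intervalIntegrable_const).abs
      (intervalIntegrable_const.add (hwT.const_mul K)) fun t ht => hK t ht.1
  have hcenter : T⁻¹ * (∫ t in (0:ℝ)..T, g t) - c = T⁻¹ * ∫ t in (0:ℝ)..T, (g t - c) := by
    rw [intervalIntegral.integral_sub hgT intervalIntegrable_const,
      intervalIntegral.integral_const, smul_eq_mul, sub_zero]
    field_simp
  rw [Real.dist_eq, hcenter, abs_mul, abs_of_pos (inv_pos.2 hT)]
  calc T⁻¹ * |∫ t in (0:ℝ)..T, (g t - c)| ≤ T⁻¹ * ∫ t in (0:ℝ)..T, (ε / 2 + K * w t) := by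
        gcongr
        exact (intervalIntegral.abs_integral_le_integral_abs hT.le).trans hmono
    _ = ε / 2 + K * (T⁻¹ * ∫ t in (0:ℝ)..T, w t) := by
        rw [intervalIntegral.integral_add intervalIntegrable_const (hwT.const_mul K),
          intervalIntegral.integral_const, intervalIntegral.integral_const_mul, smul_eq_mul,
          sub_zero]
        field_simp
    _ < ε := by linarith [le_abs_self (K * (T⁻¹ * ∫ t in (0:ℝ)..T, w t))]

lemma exists_abs_sub_le_add_mul_dist_sq {α : Type*} [PseudoMetricSpace α] [ProperSpace α]
    {F : α → ℝ} (hF : Continuous F) {s : Set α} (hs : Bornology.IsBounded s) (p : α)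
    {ε : ℝ} (hε : 0 < ε) :
    ∃ K, 0 ≤ K ∧ ∀ q ∈ s, |F q - F p| ≤ ε + K * dist q p ^ 2 := by
  obtain ⟨M, hM⟩ := hs.isCompact_closure.exists_bound_of_continuousOn hF.continuousOn
  obtain ⟨δ, hδ, hδF⟩ := Metric.continuousAt_iff.1 hF.continuousAt ε hε
  set B := max (M + |F p|) 0
  refine ⟨B / δ ^ 2, by positivity, fun q hq => ?_⟩
  rcases lt_or_ge (dist q p) δ with hnear | hfar
  · have := hδF hnear
    rw [Real.dist_eq] at this
    have : 0 ≤ B / δ ^ 2 * dist q p ^ 2 := by positivity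
    linarith
  · have hFq : |F q| ≤ M := hM q (subset_closure hq)
    have : B ≤ B / δ ^ 2 * dist q p ^ 2 := by
      rw [div_mul_eq_mul_div, le_div_iff₀ (by positivity)]
      gcongr
    linarith [abs_sub (F q) (F p), le_max_left (M + |F p|) 0]

lemma norm_le_vnorm {n : ℕ} (x : Fin n → ℝ) : ‖x‖ ≤ vnorm x := by
  refine (pi_norm_le_iff_of_nonneg (Real.sqrt_nonneg _)).2 fun i => ?_
  rw [Real.norm_eq_abs, ← Real.sqrt_sq_eq_abs]
  exact Real.sqrt_le_sqrt (Finset.single_le_sum (fun j _ => sq_nonneg (x j)) (Finset.mem_univ i))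

lemma dist_sq_le_vnorm_sq_add_vnorm_sq {n m : ℕ} (x x' : Fin n → ℝ) (y y' : Fin m → ℝ) :
    dist (x, y) (x', y') ^ 2 ≤ vnorm (x - x') ^ 2 + vnorm (y - y') ^ 2 := by
  rw [Prod.dist_eq, dist_eq_norm, dist_eq_norm]
  rcases max_cases ‖x - x'‖ ‖y - y'‖ with ⟨h, -⟩ | ⟨h, -⟩ <;> rw [h]
  · nlinarith [norm_nonneg (x - x'), norm_le_vnorm (x - x')]
  · nlinarith [norm_nonneg (y - y'), norm_le_vnorm (y - y')]

/-- Cesàro convergence of the running cost toward the steady cost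
(Step 3 in the proof of Proposition 4.2). -/
theorem average_cost_convergence {n m : ℕ} (f : (Fin n → ℝ) → (Fin m → ℝ) → ℝ)
    (hf : Continuous fun p : (Fin n → ℝ) × (Fin m → ℝ) => f p.1 p.2)
    (z : Fin n → ℝ) (v : Fin m → ℝ) (X : ℝ → Fin n → ℝ) (u : ℝ → Fin m → ℝ)
    (hXm : AEMeasurable X (volume.restrict (Set.Ici 0)))
    (hum : AEMeasurable u (volume.restrict (Set.Ici 0)))
    (hXb : ∃ C : ℝ, ∀ t : ℝ, 0 ≤ t → vnorm (X t) ≤ C)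
    (hub : ∃ C : ℝ, ∀ t : ℝ, 0 ≤ t → vnorm (u t) ≤ C)
    (hint : IntegrableOn (fun t => vnorm (X t - z) ^ 2 + vnorm (u t - v) ^ 2)
      (Set.Ici 0)) :
    Tendsto (fun T : ℝ => (1 / T) * ∫ t in (0:ℝ)..T, f (X t) (u t))
      atTop (nhds (f z v)) := by
  obtain ⟨C₁, hC₁⟩ := hXb
  obtain ⟨C₂, hC₂⟩ := hub
  have hbdd : Bornology.IsBounded ((fun t => (X t, u t)) '' Set.Ici 0) := by
    refine isBounded_iff_forall_norm_le.2 ⟨max C₁ C₂, ?_⟩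
    rintro _ ⟨t, ht, rfl⟩
    exact max_le_max ((norm_le_vnorm _).trans (hC₁ t ht)) ((norm_le_vnorm _).trans (hC₂ t ht))
  simp only [one_div]
  refine tendsto_inv_mul_intervalIntegral_of_abs_sub_le
    (hf.comp_aestronglyMeasurable (hXm.prodMk hum).aestronglyMeasurable) hint fun ε hε => ?_
  obtain ⟨K, hK, hdev⟩ := exists_abs_sub_le_add_mul_dist_sq hf hbdd (z, v) hε
  refine ⟨K, fun t ht => (hdev _ ⟨t, ht, rfl⟩).trans ?_⟩
  gcongr
  exact dist_sq_le_vnorm_sq_add_vnorm_sq _ _ _ _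

end Turnpike
end

section
/- Let A ∈ ℝ^{n×n}, B ∈ ℝ^{n×m}, b ∈ ℝⁿ, fix a Kalman controllable decomposition of (A,B) with blocks A₁₁, A₁₂, A₂₂, B₁ and matrices P₁, P₂, assume (A1): there exists c ∈ ℝ^{n−k} with A₂₂ c = P₂ᵀ b, and let f satisfy (A2): f ∈ C²(ℝⁿ×ℝᵐ) with ∇²f ⪰ δ I_{n+m} everywhere for some δ > 0. Let x ∈ 𝒳. Then (x*,u*) is the solution of Problem (O) corresponding to x if and only if there exist λ₁* ∈ ℝⁿ and λ₂* ∈ ℝ^{n−k} such that f_x(x*,u*) + Aᵀ λ₁* + P₂ λ₂* = 0, f_u(x*,u*) + Bᵀ λ₁* = 0, A x* + B u* + b = 0, and P₂ᵀ x* + c = Q₂(P₂ᵀ x + c). -/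
open MeasureTheory Matrix Filter

namespace Turnpike

/-!
Once `(x*, u*)` is feasible, the feasible set `𝒱ₓ` is the affine subspace `(x*, u*) + ker M` with
`M = [[A, B], [P₂ᵀ, 0]]`: the `𝒢₂`-component `Q₂ w` is unique because generalized eigenvectors for
eigenvalues `μ ≠ 0` (here `Re μ < 0`) are independent of `ker A₂₂`. On an affine subspace a
minimiser has its gradient orthogonal to `ker M`, i.e. in the row space of `M`, and the row
coefficients are the multipliers. Conversely `∇²f ⪰ 0` gives the first-order bound
`f q ≥ f p + ∇f(p) ⬝ (q - p)`, whose linear term vanishes on `p + ker M` when `∇f(p)` lies in the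
row space of `M`.
-/

theorem add_fderiv_le_of_fderiv_fderiv_nonneg {E : Type*} [NormedAddCommGroup E]
    [NormedSpace ℝ E] {F : E → ℝ} (hF : ContDiff ℝ 2 F)
    (hF₂ : ∀ q v, 0 ≤ fderiv ℝ (fderiv ℝ F) q v v) (p v : E) :
    F p + fderiv ℝ F p v ≤ F (p + v) := by
  have hdF : Differentiable ℝ (fderiv ℝ F) :=
    (hF.fderiv_right one_add_one_eq_two.le).differentiable one_ne_zero
  have hline : ∀ t : ℝ, HasDerivAt (fun s : ℝ => p + s • v) v t := fun t => by
    simpa using ((hasDerivAt_id t).smul_const v).const_add p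
  have hφ : ∀ t : ℝ, HasDerivAt (fun s => F (p + s • v)) (fderiv ℝ F (p + t • v) v) t :=
    fun t => ((hF.differentiable two_ne_zero) _).hasFDerivAt.comp_hasDerivAt t (hline t)
  have hψ : ∀ t : ℝ, HasDerivAt (fun s => fderiv ℝ F (p + s • v) v)
      (fderiv ℝ (fderiv ℝ F) (p + t • v) v v) t := fun t =>
    (ContinuousLinearMap.apply ℝ ℝ v).hasFDerivAt.comp_hasDerivAt t
      ((hdF _).hasFDerivAt.comp_hasDerivAt t (hline t))
  have hmono : Monotone fun s => fderiv ℝ F (p + s • v) v :=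
    monotone_of_deriv_nonneg (fun t => (hψ t).differentiableAt)
      fun t => (hψ t).deriv ▸ hF₂ _ v
  -- mean value theorem: `F (p + v) - F p` is the slope at some `ξ ∈ (0, 1)`, which is ≥ the slope at 0
  obtain ⟨ξ, hξ, hslope⟩ := exists_hasDerivAt_eq_slope (fun s => F (p + s • v)) _ one_pos
    (fun t _ => (hφ t).continuousAt.continuousWithinAt) (fun t _ => hφ t)
  have hslope_ge := hmono hξ.1.le
  simp only [hslope, zero_smul, add_zero, one_smul, sub_zero, div_one] at hslope_ge
  linarith

section CoordinateDerivatives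

variable {ι : Type*} [Fintype ι] [DecidableEq ι]

noncomputable def coordGrad (G : (ι → ℝ) → ℝ) (p : ι → ℝ) : ι → ℝ :=
  fun i => lineDeriv ℝ G p (Pi.single i 1)

noncomputable def coordHess (G : (ι → ℝ) → ℝ) (p : ι → ℝ) : Matrix ι ι ℝ :=
  fun i j => lineDeriv ℝ (fun q => lineDeriv ℝ G q (Pi.single j 1)) p (Pi.single i 1)

theorem dual_apply_eq_dotProduct (φ : Module.Dual ℝ (ι → ℝ)) (v : ι → ℝ) :
    φ v = (fun i => φ (Pi.single i 1)) ⬝ᵥ v :=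
  (LinearMap.congr_fun ((dotProductEquiv ℝ ι).apply_symm_apply φ) v).symm

theorem lineDeriv_eq_coordGrad_dotProduct {G : (ι → ℝ) → ℝ} {p : ι → ℝ}
    (hG : DifferentiableAt ℝ G p) (v : ι → ℝ) :
    lineDeriv ℝ G p v = coordGrad G p ⬝ᵥ v := by
  unfold coordGrad
  simp only [hG.lineDeriv_eq_fderiv]
  exact dual_apply_eq_dotProduct (fderiv ℝ G p).toLinearMap v

theorem coordHess_apply {G : (ι → ℝ) → ℝ} (hG : ContDiff ℝ 2 G) (p : ι → ℝ) (i j : ι) :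
    coordHess G p i j = fderiv ℝ (fderiv ℝ G) p (Pi.single i 1) (Pi.single j 1) := by
  have hdG : Differentiable ℝ (fderiv ℝ G) :=
    (hG.fderiv_right one_add_one_eq_two.le).differentiable one_ne_zero
  have h : (fun q => lineDeriv ℝ G q (Pi.single j 1)) = fun q => fderiv ℝ G q (Pi.single j 1) :=
    funext fun q => ((hG.differentiable two_ne_zero) q).lineDeriv_eq_fderiv
  rw [coordHess, h, ((hdG p).clm_apply (differentiableAt_const _)).lineDeriv_eq_fderiv,
    fderiv_clm_apply (hdG p) (differentiableAt_const _)]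
  simp only [fderiv_fun_const, Pi.zero_apply, ContinuousLinearMap.comp_zero, zero_add,
    ContinuousLinearMap.flip_apply]

theorem fderiv_fderiv_apply_self {G : (ι → ℝ) → ℝ} (hG : ContDiff ℝ 2 G) (p v : ι → ℝ) :
    fderiv ℝ (fderiv ℝ G) p v v = v ⬝ᵥ coordHess G p *ᵥ v := by
  have hH : coordHess G p = LinearMap.toMatrix₂' ℝ (fderiv ℝ (fderiv ℝ G) p).toLinearMap₁₂ := by
    ext i j
    exact coordHess_apply hG p i j
  rw [hH, ← Matrix.toLinearMap₂'_apply', Matrix.toLinearMap₂'_toMatrix']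
  rfl

theorem add_coordGrad_dotProduct_le {G : (ι → ℝ) → ℝ} (hG : ContDiff ℝ 2 G)
    (hH : ∀ q, (coordHess G q).PosSemidef) (p q : ι → ℝ) :
    G p + coordGrad G p ⬝ᵥ (q - p) ≤ G q := by
  have := add_fderiv_le_of_fderiv_fderiv_nonneg hG (fun q v => by
    simpa [fderiv_fderiv_apply_self hG] using (hH q).dotProduct_mulVec_nonneg v) p (q - p)
  rwa [← ((hG.differentiable two_ne_zero) p).lineDeriv_eq_fderiv,
    lineDeriv_eq_coordGrad_dotProduct ((hG.differentiable two_ne_zero) p), add_sub_cancel] at this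

end CoordinateDerivatives

section LinearConstraints

variable {ι κ : Type*} [Fintype ι] [DecidableEq ι] [Fintype κ] [DecidableEq κ]

theorem exists_transpose_mulVec_eq_of_ker_le (M : Matrix κ ι ℝ) (g : ι → ℝ)
    (h : ∀ d, M *ᵥ d = 0 → g ⬝ᵥ d = 0) : ∃ y, g = Mᵀ *ᵥ y := by
  have hg : dotProductEquiv ℝ ι g ∈ (LinearMap.ker M.mulVecLin).dualAnnihilator :=
    (Submodule.mem_dualAnnihilator _).2 fun d hd => h d hd
  rw [← LinearMap.range_dualMap_eq_dualAnnihilator_ker] at hg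
  obtain ⟨φ, hφ⟩ := hg
  refine ⟨(dotProductEquiv ℝ κ).symm φ, (dotProductEquiv ℝ ι).injective (LinearMap.ext fun d => ?_)⟩
  rw [← hφ]
  simp only [dotProductEquiv_apply_apply, LinearMap.dualMap_apply, mulVecLin_apply,
    mulVec_transpose, ← dotProduct_mulVec]
  exact (LinearMap.congr_fun ((dotProductEquiv ℝ κ).apply_symm_apply φ) _).symm

theorem isMinOn_iff_exists_coordGrad_add_transpose_mulVec_eq_zero {G : (ι → ℝ) → ℝ}
    (hG : ContDiff ℝ 2 G) (hH : ∀ q, (coordHess G q).PosSemidef) (M : Matrix κ ι ℝ)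
    (p : ι → ℝ) :
    IsMinOn G {q | M *ᵥ q = M *ᵥ p} p ↔ ∃ y, coordGrad G p + Mᵀ *ᵥ y = 0 := by
  have hGp : DifferentiableAt ℝ G p := hG.differentiable two_ne_zero p
  rw [isMinOn_iff]
  constructor
  · intro hmin
    obtain ⟨y, hy⟩ := exists_transpose_mulVec_eq_of_ker_le M (coordGrad G p) fun d hd => by
      rw [← lineDeriv_eq_coordGrad_dotProduct hGp]
      refine IsLocalMin.deriv_eq_zero (Filter.Eventually.of_forall fun t => ?_)
      simpa using hmin (p + t • d) (by simp [mulVec_add, mulVec_smul, hd])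
    exact ⟨-y, by rw [mulVec_neg, ← hy, add_neg_cancel]⟩
  · rintro ⟨y, hy⟩ q hq
    have hgrad : coordGrad G p ⬝ᵥ (q - p) = 0 := by
      rw [eq_neg_of_add_eq_zero_left hy, neg_dotProduct, mulVec_transpose, ← dotProduct_mulVec,
        mulVec_sub, hq, sub_self, dotProduct_zero, neg_zero]
    simpa [hgrad] using add_coordGrad_dotProduct_le hG hH p q

end LinearConstraints

theorem posSemidef_of_posSemidef_sub_smul_one {ι : Type*} [Fintype ι] [DecidableEq ι]
    {M : Matrix ι ι ℝ} {δ : ℝ} (h : (M - δ • 1).PosSemidef) (hδ : 0 ≤ δ) : M.PosSemidef := by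
  simpa using h.add (PosSemidef.one.smul hδ)

theorem eq_zero_of_mem_G1_of_mem_G2 {l : ℕ} {A22 : Matrix (Fin l) (Fin l) ℝ} {y : Fin l → ℝ}
    (h₁ : y ∈ G1 A22) (h₂ : y ∈ G2 A22) : y = 0 := by
  set T : Module.End ℂ (Fin l → ℂ) := Matrix.toLinAlgEquiv' (A22.map Complex.ofReal)
  have hstable : (fun i => (y i : ℂ)) ∈ ⨆ (μ : ℂ) (_ : μ ≠ 0), T.maxGenEigenspace μ := by
    refine Submodule.span_le.2 ?_ h₁
    rintro w ⟨μ, hμ, hw⟩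
    refine Submodule.mem_iSup_of_mem μ (Submodule.mem_iSup_of_mem (by rintro rfl; simp at hμ) ?_)
    refine (T.mem_maxGenEigenspace μ w).2 ⟨l, ?_⟩
    rw [show (T - μ • 1) ^ l = Matrix.toLinAlgEquiv' ((A22.map Complex.ofReal - μ • 1) ^ l) by
      simp [T]]
    exact hw
  have hkernel : (fun i => (y i : ℂ)) ∈ T.maxGenEigenspace 0 := by
    refine Module.End.eigenspace_le_maxGenEigenspace (Module.End.mem_eigenspace_iff.2 ?_)
    ext i
    simpa [T, mulVec, dotProduct] using congrArg (fun v => (v i : ℂ)) (show A22 *ᵥ y = 0 from h₂)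
  funext i
  simpa using congrFun (Submodule.disjoint_def.1 (T.independent_maxGenEigenspace 0) _
    hkernel hstable) i

theorem IsQ2.unique {l : ℕ} {A22 : Matrix (Fin l) (Fin l) ℝ} {w y y' : Fin l → ℝ}
    (h : IsQ2 A22 w y) (h' : IsQ2 A22 w y') : y = y' := by
  refine sub_eq_zero.1 (eq_zero_of_mem_G1_of_mem_G2 (A22 := A22) ?_ ?_)
  · have hsub : (fun i => ((y - y') i : ℂ)) =
        (fun i => ((w - y') i : ℂ)) - fun i => ((w - y) i : ℂ) := by
      ext; simp
    rw [G1, Set.mem_ofPred_eq, hsub]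
    exact Submodule.sub_mem _ h'.2 h.2
  · change A22 *ᵥ (y - y') = 0
    rw [mulVec_sub, h.1, h'.1, sub_self]

section StaticProblem

variable {n m l : ℕ}

/-- `f` on `ℝⁿ × ℝᵐ` read as a function of one vector indexed by `Fin n ⊕ Fin m`, the
coordinates in which `hessMat` is written. -/
def sumUncurry (f : (Fin n → ℝ) → (Fin m → ℝ) → ℝ) (y : Fin n ⊕ Fin m → ℝ) : ℝ :=
  f (fun a => y (Sum.inl a)) (fun a => y (Sum.inr a))

theorem contDiff_sumUncurry {f : (Fin n → ℝ) → (Fin m → ℝ) → ℝ}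
    (hf : ContDiff ℝ 2 fun p : (Fin n → ℝ) × (Fin m → ℝ) => f p.1 p.2) :
    ContDiff ℝ 2 (sumUncurry f) :=
  hf.comp (LinearEquiv.sumArrowLequivProdArrow (Fin n) (Fin m) ℝ ℝ).toContinuousLinearEquiv.contDiff

theorem coordGrad_sumUncurry (f : (Fin n → ℝ) → (Fin m → ℝ) → ℝ) (x : Fin n → ℝ)
    (u : Fin m → ℝ) :
    coordGrad (sumUncurry f) (Sum.elim x u) = Sum.elim (gradX f x u) (gradU f x u) := by
  ext (i | j) <;>
    refine congrArg (deriv · 0) (funext fun t => congrArg₂ f ?_ ?_) <;> ext a <;>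
    simp [Pi.single_apply]

theorem coordHess_sumUncurry (f : (Fin n → ℝ) → (Fin m → ℝ) → ℝ) (x : Fin n → ℝ)
    (u : Fin m → ℝ) : coordHess (sumUncurry f) (Sum.elim x u) = hessMat f x u :=
  rfl

theorem inV_iff_of_inV {A : Matrix (Fin n) (Fin n) ℝ} {B : Matrix (Fin n) (Fin m) ℝ}
    {b : Fin n → ℝ} {P₂ : Matrix (Fin n) (Fin l) ℝ} {c : Fin l → ℝ} {x xs : Fin n → ℝ}
    {us : Fin m → ℝ} (h : InV A B b P₂ c x xs us) (z : Fin n → ℝ) (w : Fin m → ℝ) :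
    InV A B b P₂ c x z w ↔ A *ᵥ z + B *ᵥ w = A *ᵥ xs + B *ᵥ us ∧ P₂ᵀ *ᵥ z = P₂ᵀ *ᵥ xs := by
  constructor
  · rintro ⟨hstate, hQ₂⟩
    exact ⟨add_right_cancel (hstate.trans h.1.symm), add_right_cancel (hQ₂.unique h.2)⟩
  · rintro ⟨hstate, hP₂⟩
    exact ⟨hstate ▸ h.1, hP₂ ▸ h.2⟩

theorem inV_iff_fromBlocks_mulVec_eq {A : Matrix (Fin n) (Fin n) ℝ}
    {B : Matrix (Fin n) (Fin m) ℝ} {b : Fin n → ℝ} {P₂ : Matrix (Fin n) (Fin l) ℝ}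
    {c : Fin l → ℝ} {x xs : Fin n → ℝ} {us : Fin m → ℝ} (h : InV A B b P₂ c x xs us)
    (q : Fin n ⊕ Fin m → ℝ) :
    InV A B b P₂ c x (q ∘ Sum.inl) (q ∘ Sum.inr) ↔
      fromBlocks A B P₂ᵀ 0 *ᵥ q = fromBlocks A B P₂ᵀ 0 *ᵥ Sum.elim xs us := by
  rw [inV_iff_of_inV h]
  simp only [fromBlocks_mulVec, zero_mulVec, add_zero, Sum.elim_comp_inl, Sum.elim_comp_inr,
    Sum.elim_eq_iff]

theorem exists_transpose_fromBlocks_mulVec_eq_iff (A : Matrix (Fin n) (Fin n) ℝ)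
    (B : Matrix (Fin n) (Fin m) ℝ) (P₂ : Matrix (Fin n) (Fin l) ℝ) (gx : Fin n → ℝ)
    (gu : Fin m → ℝ) :
    (∃ y, Sum.elim gx gu + (fromBlocks A B P₂ᵀ (0 : Matrix (Fin l) (Fin m) ℝ))ᵀ *ᵥ y = 0) ↔
      ∃ l₁ l₂, gx + Aᵀ *ᵥ l₁ + P₂ *ᵥ l₂ = 0 ∧ gu + Bᵀ *ᵥ l₁ = 0 := by
  simp only [fromBlocks_transpose, transpose_transpose, transpose_zero, fromBlocks_mulVec,
    zero_mulVec, add_zero, ← Sum.elim_add_add, ← Sum.elim_zero_zero, Sum.elim_eq_iff, add_assoc]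
  exact ⟨fun ⟨y, hy⟩ => ⟨_, _, hy⟩, fun ⟨l₁, l₂, hy⟩ => ⟨Sum.elim l₁ l₂, hy⟩⟩

end StaticProblem

theorem static_problem_multiplier_characterization_general {n l m : ℕ}
    (A : Matrix (Fin n) (Fin n) ℝ) (B : Matrix (Fin n) (Fin m) ℝ)
    (P₂ : Matrix (Fin n) (Fin l) ℝ)
    (b : Fin n → ℝ) (c : Fin l → ℝ)
    (f : (Fin n → ℝ) → (Fin m → ℝ) → ℝ) (δ : ℝ) (hδ : 0 < δ) (hA2 : A2Hyp f δ)
    (x : Fin n → ℝ)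
    (xs : Fin n → ℝ) (us : Fin m → ℝ) :
    (InV A B b P₂ c x xs us ∧
        ∀ (z : Fin n → ℝ) (w : Fin m → ℝ), InV A B b P₂ c x z w → f xs us ≤ f z w) ↔
      ∃ (l₁ : Fin n → ℝ) (l₂ : Fin l → ℝ),
        gradX f xs us + Aᵀ.mulVec l₁ + P₂.mulVec l₂ = 0 ∧
        gradU f xs us + Bᵀ.mulVec l₁ = 0 ∧
        A.mulVec xs + B.mulVec us + b = 0 ∧
        IsQ2 (P₂ᵀ * A * P₂) (P₂ᵀ.mulVec x + c) (P₂ᵀ.mulVec xs + c) := by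
  have hH : ∀ q, (coordHess (sumUncurry f) q).PosSemidef := fun q => by
    rw [← Sum.elim_comp_inl_inr q, coordHess_sumUncurry]
    exact posSemidef_of_posSemidef_sub_smul_one (hA2.2 _ _) hδ.le
  have hKKT := isMinOn_iff_exists_coordGrad_add_transpose_mulVec_eq_zero
    (contDiff_sumUncurry hA2.1) hH (fromBlocks A B P₂ᵀ 0) (Sum.elim xs us)
  rw [coordGrad_sumUncurry, exists_transpose_fromBlocks_mulVec_eq_iff, isMinOn_iff] at hKKT
  constructor
  · rintro ⟨hxs, hmin⟩
    obtain ⟨l₁, l₂, h₁, h₂⟩ :=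
      hKKT.1 fun q hq => hmin _ _ ((inV_iff_fromBlocks_mulVec_eq hxs q).2 hq)
    exact ⟨l₁, l₂, h₁, h₂, hxs⟩
  · rintro ⟨l₁, l₂, h₁, h₂, hxs⟩
    exact ⟨hxs, fun z w hzw =>
      hKKT.2 ⟨l₁, l₂, h₁, h₂⟩ _ ((inV_iff_fromBlocks_mulVec_eq hxs (Sum.elim z w)).1 hzw)⟩

/-- Lagrange multiplier characterization of the solution of Problem (O)
(Theorem 5.2, equation (5.3)). -/
theorem static_problem_multiplier_characterization {n k l m : ℕ}
    (A : Matrix (Fin n) (Fin n) ℝ) (B : Matrix (Fin n) (Fin m) ℝ)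
    (P₁ : Matrix (Fin n) (Fin k) ℝ) (P₂ : Matrix (Fin n) (Fin l) ℝ)
    (hK : KalmanDec n k l m A B P₁ P₂)
    (b : Fin n → ℝ) (c : Fin l → ℝ) (hc : (P₂ᵀ * A * P₂).mulVec c = P₂ᵀ.mulVec b)
    (f : (Fin n → ℝ) → (Fin m → ℝ) → ℝ) (δ : ℝ) (hδ : 0 < δ) (hA2 : A2Hyp f δ)
    (x : Fin n → ℝ) (hx : Feas (P₂ᵀ * A * P₂) (P₂ᵀ.mulVec x + c))
    (xs : Fin n → ℝ) (us : Fin m → ℝ) :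
    (InV A B b P₂ c x xs us ∧
        ∀ (z : Fin n → ℝ) (w : Fin m → ℝ), InV A B b P₂ c x z w → f xs us ≤ f z w) ↔
      ∃ (l₁ : Fin n → ℝ) (l₂ : Fin l → ℝ),
        gradX f xs us + Aᵀ.mulVec l₁ + P₂.mulVec l₂ = 0 ∧
        gradU f xs us + Bᵀ.mulVec l₁ = 0 ∧
        A.mulVec xs + B.mulVec us + b = 0 ∧
        IsQ2 (P₂ᵀ * A * P₂) (P₂ᵀ.mulVec x + c) (P₂ᵀ.mulVec xs + c) :=
  static_problem_multiplier_characterization_general A B P₂ b c f δ hδ hA2 x xs us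

end Turnpike
end
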